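/- arXiv:2109.02196 — 2 statements merged into one kernel-verified Lean document; each statement's English description precedes it below -/
import Mathlib

section
/- The hom-order on monotone maps between quantum posets is compatible with composition (order-enrichment): if F₁ ⊑ F₂ : (𝒳,R) → (𝒴,S) and G₁ ⊑ G₂ : (𝒴,S) → (𝒵,T) are monotone functions, then G₁∘F₁ ⊑ G₂∘F₂, where F ⊑ G means G ≤ S∘F (respectively T∘(G∘F) for the composites). -/
open Matrix

/-- A quantum relation between quantum sets: atom index types `ι`, `κ` with
dimension functions `a`, `b`; an entrywise choice of operator subspaces,
operators `L(X,Y)` represented as matrices. -/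
abbrev QRel (ι κ : Type) (a : ι → ℕ) (b : κ → ℕ) : Type :=
  ∀ (X : ι) (Y : κ), Submodule ℂ (Matrix (Fin (b Y)) (Fin (a X)) ℂ)

/-- Composition of quantum relations: entrywise span of products over
intermediate atoms. -/
noncomputable def qComp {ι κ μ : Type} {a : ι → ℕ} {b : κ → ℕ} {c : μ → ℕ}
    (S : QRel κ μ b c) (R : QRel ι κ a b) : QRel ι μ a c :=
  fun X Z => Submodule.span ℂ
    {t | ∃ (Y : κ) (r : Matrix (Fin (b Y)) (Fin (a X)) ℂ)
        (s : Matrix (Fin (c Z)) (Fin (b Y)) ℂ),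
        r ∈ R X Y ∧ s ∈ S Y Z ∧ t = s * r}

/-- Adjoint of a quantum relation: entrywise conjugate transpose. -/
noncomputable def qAdj {ι κ : Type} {a : ι → ℕ} {b : κ → ℕ} (R : QRel ι κ a b) : QRel κ ι b a :=
  fun Y X =>
  { carrier := {g | gᴴ ∈ R X Y}
    add_mem' := fun hx hy => by
      simpa [Matrix.conjTranspose_add] using (R X Y).add_mem hx hy
    zero_mem' := by simpa using (R X Y).zero_mem
    smul_mem' := fun c x hx => by
      simpa [Matrix.conjTranspose_smul] using (R X Y).smul_mem (star c) hx }

/-- The identity quantum relation: `ℂ·1` on the diagonal, `0` elsewhere. -/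
noncomputable def qId (ι : Type) (a : ι → ℕ) : QRel ι ι a a :=
  fun X X' => Submodule.span ℂ
    {m | X = X' ∧ ∀ i j, m i j = if (i : ℕ) = (j : ℕ) then 1 else 0}

/-- A quantum relation is a function when `F∘F† ≤ I` and `F†∘F ≥ I`. -/
def qIsFunc {ι κ : Type} {a : ι → ℕ} {b : κ → ℕ} (F : QRel ι κ a b) : Prop :=
  qComp F (qAdj F) ≤ qId κ b ∧ qId ι a ≤ qComp (qAdj F) F

/-- A quantum partial order: reflexive, transitive, antisymmetric. -/
def qIsOrder {ι : Type} {a : ι → ℕ} (R : QRel ι ι a a) : Prop :=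
  qId ι a ≤ R ∧ qComp R R ≤ R ∧ R ⊓ qAdj R ≤ qId ι a

/-- The order on functions into a quantum poset `(𝒳,R)`: `F ⊑ G` iff `G ≤ R∘F`. -/
def qFunLE {ι κ : Type} {a : ι → ℕ} {b : κ → ℕ} (R : QRel κ κ b b)
    (F G : QRel ι κ a b) : Prop :=
  G ≤ qComp R F


lemma qComp_mem {ι κ μ : Type} {a : ι → ℕ} {b : κ → ℕ} {c : μ → ℕ}
    {S : QRel κ μ b c} {R : QRel ι κ a b} {X : ι} {Y : κ} {Z : μ}
    {r : Matrix (Fin (b Y)) (Fin (a X)) ℂ} {s : Matrix (Fin (c Z)) (Fin (b Y)) ℂ}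
    (hr : r ∈ R X Y) (hs : s ∈ S Y Z) : s * r ∈ qComp S R X Z :=
  Submodule.subset_span ⟨Y, r, s, hr, hs, rfl⟩

lemma qComp_mono {ι κ μ : Type} {a : ι → ℕ} {b : κ → ℕ} {c : μ → ℕ}
    {S₁ S₂ : QRel κ μ b c} {R₁ R₂ : QRel ι κ a b}
    (hS : S₁ ≤ S₂) (hR : R₁ ≤ R₂) : qComp S₁ R₁ ≤ qComp S₂ R₂ := by
  intro X Z
  apply Submodule.span_le.2
  rintro t ⟨Y, r, s, hr, hs, rfl⟩
  exact qComp_mem (hR X Y hr) (hS Y Z hs)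

lemma qComp_assoc {ι κ μ ν : Type} {a : ι → ℕ} {b : κ → ℕ} {c : μ → ℕ} {d : ν → ℕ}
    (S : QRel μ ν c d) (R : QRel κ μ b c) (Q : QRel ι κ a b) :
    qComp (qComp S R) Q = qComp S (qComp R Q) := by
  funext X W
  apply le_antisymm
  · apply Submodule.span_le.2
    rintro t ⟨Y, q, sr, hq, hsr, rfl⟩
    induction hsr using Submodule.span_induction with
    | mem m hm =>
        obtain ⟨Z, r, s, hrm, hsm, rfl⟩ := hm
        rw [Matrix.mul_assoc]
        exact qComp_mem (qComp_mem hq hrm) hsm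
    | zero => simpa using (qComp S (qComp R Q) X W).zero_mem
    | add m₁ m₂ _ _ h₁ h₂ =>
        simpa [Matrix.add_mul] using (qComp S (qComp R Q) X W).add_mem h₁ h₂
    | smul c m _ h =>
        simpa [Matrix.smul_mul] using (qComp S (qComp R Q) X W).smul_mem c h
  · apply Submodule.span_le.2
    rintro t ⟨Z, rq, s, hrq, hs, rfl⟩
    induction hrq using Submodule.span_induction with
    | mem m hm =>
        obtain ⟨Y, q, r, hqm, hrm, rfl⟩ := hm
        rw [← Matrix.mul_assoc]
        exact qComp_mem hqm (qComp_mem hrm hs)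
    | zero => simpa using (qComp (qComp S R) Q X W).zero_mem
    | add m₁ m₂ _ _ h₁ h₂ =>
        simpa [Matrix.mul_add] using (qComp (qComp S R) Q X W).add_mem h₁ h₂
    | smul c m _ h =>
        simpa [Matrix.mul_smul] using (qComp (qComp S R) Q X W).smul_mem c h

/-- Order-enrichment of the category of quantum posets: the hom-order is
compatible with composition. -/
theorem qFunLE_comp_mono {ι κ μ : Type} {a : ι → ℕ} {b : κ → ℕ} {c : μ → ℕ}
    (R : QRel ι ι a a) (S : QRel κ κ b b) (T : QRel μ μ c c)
    (hR : qIsOrder R) (hS : qIsOrder S) (hT : qIsOrder T)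
    (F₁ F₂ : QRel ι κ a b) (G₁ G₂ : QRel κ μ b c)
    (hF₁ : qIsFunc F₁) (hF₂ : qIsFunc F₂) (hG₁ : qIsFunc G₁) (hG₂ : qIsFunc G₂)
    (hF₁mono : qComp F₁ R ≤ qComp S F₁) (hF₂mono : qComp F₂ R ≤ qComp S F₂)
    (hG₁mono : qComp G₁ S ≤ qComp T G₁) (hG₂mono : qComp G₂ S ≤ qComp T G₂)
    (hF : qFunLE S F₁ F₂) (hG : qFunLE T G₁ G₂) :
    qFunLE T (qComp G₁ F₁) (qComp G₂ F₂) := by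
  have step1 : qComp G₂ F₂ ≤ qComp (qComp T G₁) (qComp S F₁) := qComp_mono hG hF
  have step2 : qComp (qComp T G₁) (qComp S F₁) = qComp T (qComp (qComp G₁ S) F₁) := by
    rw [qComp_assoc, ← qComp_assoc G₁ S F₁]
  have step3 : qComp T (qComp (qComp G₁ S) F₁) ≤ qComp T (qComp (qComp T G₁) F₁) :=
    qComp_mono le_rfl (qComp_mono hG₁mono le_rfl)
  have step4 : qComp T (qComp (qComp T G₁) F₁) = qComp (qComp T T) (qComp G₁ F₁) := by
    rw [qComp_assoc, ← qComp_assoc T T (qComp G₁ F₁)]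
  have step5 : qComp (qComp T T) (qComp G₁ F₁) ≤ qComp T (qComp G₁ F₁) :=
    qComp_mono hT.2.1 le_rfl
  exact fun X Z => le_trans (step1 X Z) (le_trans (le_of_eq (congrFun (congrFun step2 X) Z)) (le_trans (step3 X Z) (le_trans (le_of_eq (congrFun (congrFun step4 X) Z)) (step5 X Z))))
end

section
/- Monoidal product of quantum partial orders is a quantum partial order: if R is a quantum order on 𝒳 and S is a quantum order on 𝒴, then R × S — defined on 𝒳 × 𝒴 (whose atoms are X ⊗ Y) by (R×S)(X⊗Y, X'⊗Y') = R(X,X') ⊗ S(Y,Y') — is reflexive, transitive, and antisymmetric. -/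
open Matrix

/-- The monoidal product of quantum relations: atoms are tensor products
(realized via the Kronecker product and `finProdFinEquiv`), entries are tensor
products of subspaces. -/
noncomputable def qProd {ι κ : Type} {a : ι → ℕ} {b : κ → ℕ}
    (R : QRel ι ι a a) (S : QRel κ κ b b) :
    QRel (ι × κ) (ι × κ) (fun p => a p.1 * b p.2) (fun p => a p.1 * b p.2) :=
  fun p q => Submodule.span ℂ
    {m | ∃ r ∈ R p.1 q.1, ∃ s ∈ S p.2 q.2,
      m = Matrix.reindex finProdFinEquiv finProdFinEquiv
            (Matrix.kroneckerMap (· * ·) r s)}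

/-!
Reflexivity and transitivity are functorial: `qProd` is monotone, contains the identity
relation, and the mixed-product rule `(r₂ ⊗ s₂)(r₁ ⊗ s₁) = r₂r₁ ⊗ s₂s₁` gives
`(R₂ × S₂) ∘ (R₁ × S₁) ≤ (R₂ ∘ R₁) × (S₂ ∘ S₁)`.

For antisymmetry, cut a matrix on `X ⊗ Y` into blocks along either tensor factor. Taking a
block is linear, sends `r ⊗ s` to a multiple of `r` (resp. `s`) and commutes with `ᴴ`, so every
block of an element of `(R × S) ∧ (R × S)†` lies in `R ∧ R†` (resp. `S ∧ S†`), hence in the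
identity relation. A matrix all of whose blocks along both factors are scalar is itself scalar.
-/

section Kronecker

variable {α : Type*}

noncomputable def finKron [Mul α] {m n m' n' : ℕ} (r : Matrix (Fin m') (Fin m) α)
    (s : Matrix (Fin n') (Fin n) α) : Matrix (Fin (m' * n')) (Fin (m * n)) α :=
  Matrix.reindex finProdFinEquiv finProdFinEquiv (Matrix.kroneckerMap (· * ·) r s)

@[simp]
lemma finKron_apply [Mul α] {m n m' n' : ℕ} (r : Matrix (Fin m') (Fin m) α)
    (s : Matrix (Fin n') (Fin n) α) (x : Fin m') (i : Fin n') (y : Fin m) (j : Fin n) :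
    finKron r s (finProdFinEquiv (x, i)) (finProdFinEquiv (y, j)) = r x y * s i j := by
  simp [finKron]

lemma finKron_mul_finKron [CommSemiring α] {l m n l' m' n' : ℕ}
    (r₂ : Matrix (Fin l') (Fin m') α) (r₁ : Matrix (Fin m') (Fin m) α)
    (s₂ : Matrix (Fin n') (Fin l) α) (s₁ : Matrix (Fin l) (Fin n) α) :
    finKron r₂ s₂ * finKron r₁ s₁ = finKron (r₂ * r₁) (s₂ * s₁) := by
  simp only [finKron, Matrix.reindex_apply, Matrix.submatrix_mul_equiv]
  rw [← Matrix.mul_kronecker_mul]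

lemma finKron_one_one [MulZeroOneClass α] {m n : ℕ} :
    finKron (1 : Matrix (Fin m) (Fin m) α) (1 : Matrix (Fin n) (Fin n) α) = 1 := by
  rw [finKron, Matrix.one_kronecker_one, Matrix.reindex_apply,
    Matrix.submatrix_one_equiv]

lemma Matrix.ext_finProdFin {m n m' n' : ℕ} {t t' : Matrix (Fin (m' * n')) (Fin (m * n)) α}
    (h : ∀ x i y j, t (finProdFinEquiv (x, i)) (finProdFinEquiv (y, j)) =
      t' (finProdFinEquiv (x, i)) (finProdFinEquiv (y, j))) : t = t' := by
  ext u v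
  simpa only [Prod.mk.eta, Equiv.apply_symm_apply] using
    h (finProdFinEquiv.symm u).1 (finProdFinEquiv.symm u).2
      (finProdFinEquiv.symm v).1 (finProdFinEquiv.symm v).2

end Kronecker

section Slices

variable {α : Type*} {m n m' n' : ℕ}

noncomputable def leftSlice [Semiring α] (i : Fin n') (j : Fin n) :
    Matrix (Fin (m' * n')) (Fin (m * n)) α →ₗ[α] Matrix (Fin m') (Fin m) α where
  toFun t := t.submatrix (fun x => finProdFinEquiv (x, i)) (fun y => finProdFinEquiv (y, j))
  map_add' _ _ := rfl
  map_smul' _ _ := rfl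

noncomputable def rightSlice [Semiring α] (x : Fin m') (y : Fin m) :
    Matrix (Fin (m' * n')) (Fin (m * n)) α →ₗ[α] Matrix (Fin n') (Fin n) α where
  toFun t := t.submatrix (fun i => finProdFinEquiv (x, i)) (fun j => finProdFinEquiv (y, j))
  map_add' _ _ := rfl
  map_smul' _ _ := rfl

@[simp]
lemma leftSlice_apply [Semiring α] (i : Fin n') (j : Fin n)
    (t : Matrix (Fin (m' * n')) (Fin (m * n)) α) (x : Fin m') (y : Fin m) :
    leftSlice i j t x y = t (finProdFinEquiv (x, i)) (finProdFinEquiv (y, j)) := rfl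

@[simp]
lemma rightSlice_apply [Semiring α] (x : Fin m') (y : Fin m)
    (t : Matrix (Fin (m' * n')) (Fin (m * n)) α) (i : Fin n') (j : Fin n) :
    rightSlice x y t i j = t (finProdFinEquiv (x, i)) (finProdFinEquiv (y, j)) := rfl

lemma leftSlice_finKron [CommSemiring α] (i : Fin n') (j : Fin n)
    (r : Matrix (Fin m') (Fin m) α) (s : Matrix (Fin n') (Fin n) α) :
    leftSlice i j (finKron r s) = s i j • r := by
  ext x y
  simp [mul_comm]

lemma rightSlice_finKron [Semiring α] (x : Fin m') (y : Fin m)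
    (r : Matrix (Fin m') (Fin m) α) (s : Matrix (Fin n') (Fin n) α) :
    rightSlice x y (finKron r s) = r x y • s := by
  ext i j
  simp

lemma ext_leftSlice [Semiring α] {t t' : Matrix (Fin (m' * n')) (Fin (m * n)) α}
    (h : ∀ i j, leftSlice i j t = leftSlice i j t') : t = t' :=
  Matrix.ext_finProdFin fun x i y j => congrFun (congrFun (h i j) x) y

lemma ext_rightSlice [Semiring α] {t t' : Matrix (Fin (m' * n')) (Fin (m * n)) α}
    (h : ∀ x y, rightSlice x y t = rightSlice x y t') : t = t' :=
  Matrix.ext_finProdFin fun x i y j => congrFun (congrFun (h x y) i) j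

open Submodule in
lemma mem_span_one_of_slices [CommSemiring α] {t : Matrix (Fin (m * n)) (Fin (m * n)) α}
    (hl : ∀ i j, leftSlice i j t ∈ α ∙ 1) (hr : ∀ x y, rightSlice x y t ∈ α ∙ 1) :
    t ∈ α ∙ 1 := by
  choose c hc using fun i j => mem_span_singleton.1 (hl i j)
  choose d hd using fun x y => mem_span_singleton.1 (hr x y)
  have hc' : ∀ x i y j, t (finProdFinEquiv (x, i)) (finProdFinEquiv (y, j)) =
      c i j * (1 : Matrix (Fin m) (Fin m) α) x y := fun x i y j => by
    rw [← leftSlice_apply i j t x y, ← hc]; rfl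
  have hd' : ∀ x i y j, t (finProdFinEquiv (x, i)) (finProdFinEquiv (y, j)) =
      d x y * (1 : Matrix (Fin n) (Fin n) α) i j := fun x i y j => by
    rw [← rightSlice_apply x y t i j, ← hd]; rfl
  rcases isEmpty_or_nonempty (Fin m) with _ | ⟨⟨x₀⟩⟩
  · exact mem_span_singleton.2 ⟨0, Matrix.ext_finProdFin fun x => isEmptyElim x⟩
  refine mem_span_singleton.2 ⟨d x₀ x₀, Matrix.ext_finProdFin fun x i y j => ?_⟩
  have hc₀ : c i j = d x₀ x₀ * (1 : Matrix (Fin n) (Fin n) α) i j := by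
    simpa using (hc' x₀ i x₀ j).symm.trans (hd' x₀ i x₀ j)
  rw [hc' x i y j, hc₀, ← finKron_one_one, Matrix.smul_apply, finKron_apply, smul_eq_mul]
  ring

end Slices

section QuantumRelations

open Submodule

variable {ι κ : Type} {a : ι → ℕ} {b : κ → ℕ}

lemma qId_self (X : ι) : qId ι a X X = ℂ ∙ 1 := by
  unfold qId
  congr 1
  ext t
  simp [← Matrix.ext_iff, Matrix.one_apply, Fin.val_inj]

lemma qId_of_ne {X X' : ι} (h : X ≠ X') : qId ι a X X' = ⊥ := by
  simp [qId, h]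

lemma mem_qId_prod_of_slices {p q : ι × κ}
    {t : Matrix (Fin (a q.1 * b q.2)) (Fin (a p.1 * b p.2)) ℂ}
    (hl : ∀ i j, leftSlice i j t ∈ qId ι a p.1 q.1)
    (hr : ∀ x y, rightSlice x y t ∈ qId κ b p.2 q.2) :
    t ∈ qId (ι × κ) (fun p => a p.1 * b p.2) p q := by
  by_cases h₁ : p.1 = q.1
  · by_cases h₂ : p.2 = q.2
    · obtain rfl : p = q := Prod.ext h₁ h₂
      simp only [qId_self] at hl hr ⊢
      exact mem_span_one_of_slices hl hr
    · simp only [qId_of_ne h₂, mem_bot] at hr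
      rw [ext_rightSlice fun x y => (hr x y).trans (map_zero _).symm]
      exact zero_mem _
  · simp only [qId_of_ne h₁, mem_bot] at hl
    rw [ext_leftSlice fun i j => (hl i j).trans (map_zero _).symm]
    exact zero_mem _

variable {R R' R₁ R₂ : QRel ι ι a a} {S S' S₁ S₂ : QRel κ κ b b}

lemma finKron_mem_qProd {p q : ι × κ} {r : Matrix (Fin (a q.1)) (Fin (a p.1)) ℂ}
    {s : Matrix (Fin (b q.2)) (Fin (b p.2)) ℂ} (hr : r ∈ R p.1 q.1) (hs : s ∈ S p.2 q.2) :
    finKron r s ∈ qProd R S p q :=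
  subset_span ⟨r, hr, s, hs, rfl⟩

lemma qProd_le_iff {p q : ι × κ}
    {W : Submodule ℂ (Matrix (Fin (a q.1 * b q.2)) (Fin (a p.1 * b p.2)) ℂ)} :
    qProd R S p q ≤ W ↔ ∀ r ∈ R p.1 q.1, ∀ s ∈ S p.2 q.2, finKron r s ∈ W := by
  refine span_le.trans ⟨fun h r hr s hs => h ⟨r, hr, s, hs, rfl⟩, ?_⟩
  rintro h _ ⟨r, hr, s, hs, rfl⟩
  exact h r hr s hs

lemma qProd_mono (hR : R ≤ R') (hS : S ≤ S') : qProd R S ≤ qProd R' S' := fun _ _ =>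
  qProd_le_iff.2 fun _ hr _ hs => finKron_mem_qProd (hR _ _ hr) (hS _ _ hs)

lemma qId_le_qProd_qId : qId (ι × κ) (fun p => a p.1 * b p.2) ≤ qProd (qId ι a) (qId κ b) := by
  intro p q t ht
  by_cases h : p = q
  · subst h
    obtain ⟨c, rfl⟩ := mem_span_singleton.1 (by simpa only [qId_self] using ht)
    rw [← finKron_one_one]
    refine smul_mem _ c (finKron_mem_qProd ?_ ?_) <;> simp [qId_self, mem_span_singleton_self]
  · rw [qId_of_ne h, mem_bot] at ht
    rw [ht]
    exact zero_mem _

lemma mul_mem_qProd_qComp {p m q : ι × κ}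
    {t₁ : Matrix (Fin (a m.1 * b m.2)) (Fin (a p.1 * b p.2)) ℂ}
    {t₂ : Matrix (Fin (a q.1 * b q.2)) (Fin (a m.1 * b m.2)) ℂ}
    (h₁ : t₁ ∈ qProd R₁ S₁ p m) (h₂ : t₂ ∈ qProd R₂ S₂ m q) :
    t₂ * t₁ ∈ qProd (qComp R₂ R₁) (qComp S₂ S₁) p q := by
  induction h₂, h₁ using span_induction₂ with
  | mem_mem _ _ h₂ h₁ =>
    obtain ⟨r₂, hr₂, s₂, hs₂, rfl⟩ := h₂
    obtain ⟨r₁, hr₁, s₁, hs₁, rfl⟩ := h₁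
    change finKron r₂ s₂ * finKron r₁ s₁ ∈ _
    rw [finKron_mul_finKron]
    exact finKron_mem_qProd (subset_span ⟨m.1, r₁, r₂, hr₁, hr₂, rfl⟩)
      (subset_span ⟨m.2, s₁, s₂, hs₁, hs₂, rfl⟩)
  | zero_left => simp
  | zero_right => simp
  | add_left _ _ _ _ _ _ h h' => simpa [Matrix.add_mul] using add_mem h h'
  | add_right _ _ _ _ _ _ h h' => simpa [Matrix.mul_add] using add_mem h h'
  | smul_left c _ _ _ _ h => simpa using smul_mem _ c h
  | smul_right c _ _ _ _ h => simpa using smul_mem _ c h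

lemma qComp_qProd_le :
    qComp (qProd R₂ S₂) (qProd R₁ S₁) ≤ qProd (qComp R₂ R₁) (qComp S₂ S₁) := fun _ _ =>
  span_le.2 fun _ ⟨_, _, _, h₁, h₂, ht⟩ => ht ▸ mul_mem_qProd_qComp h₁ h₂

lemma leftSlice_mem_of_mem_qProd {p q : ι × κ}
    {t : Matrix (Fin (a q.1 * b q.2)) (Fin (a p.1 * b p.2)) ℂ} (ht : t ∈ qProd R S p q)
    (i : Fin (b q.2)) (j : Fin (b p.2)) : leftSlice i j t ∈ R p.1 q.1 := by
  refine (qProd_le_iff (W := (R p.1 q.1).comap (leftSlice i j))).2 (fun r hr s _ => ?_) ht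
  rw [mem_comap, leftSlice_finKron]
  exact smul_mem _ _ hr

lemma rightSlice_mem_of_mem_qProd {p q : ι × κ}
    {t : Matrix (Fin (a q.1 * b q.2)) (Fin (a p.1 * b p.2)) ℂ} (ht : t ∈ qProd R S p q)
    (x : Fin (a q.1)) (y : Fin (a p.1)) : rightSlice x y t ∈ S p.2 q.2 := by
  refine (qProd_le_iff (W := (S p.2 q.2).comap (rightSlice x y))).2 (fun r _ s hs => ?_) ht
  rw [mem_comap, rightSlice_finKron]
  exact smul_mem _ _ hs

lemma qProd_inf_qAdj_le (hR : R ⊓ qAdj R ≤ qId ι a) (hS : S ⊓ qAdj S ≤ qId κ b) :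
    qProd R S ⊓ qAdj (qProd R S) ≤ qId (ι × κ) (fun p => a p.1 * b p.2) := by
  rintro p q t ⟨ht, ht'⟩
  -- `ht'` says `tᴴ ∈ qProd R S q p`, and taking a slice commutes with `ᴴ` definitionally.
  refine mem_qId_prod_of_slices (fun i j => hR _ _ ⟨?_, ?_⟩) (fun x y => hS _ _ ⟨?_, ?_⟩)
  · exact leftSlice_mem_of_mem_qProd ht i j
  · exact leftSlice_mem_of_mem_qProd ht' j i
  · exact rightSlice_mem_of_mem_qProd ht x y
  · exact rightSlice_mem_of_mem_qProd ht' y x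

end QuantumRelations

/-- The monoidal product of quantum partial orders is a quantum partial
order. -/
theorem qProd_isOrder {ι κ : Type} {a : ι → ℕ} {b : κ → ℕ}
    (R : QRel ι ι a a) (S : QRel κ κ b b)
    (hR : qIsOrder R) (hS : qIsOrder S) :
    qIsOrder (qProd R S) := by
  obtain ⟨hR_refl, hR_trans, hR_antisymm⟩ := hR
  obtain ⟨hS_refl, hS_trans, hS_antisymm⟩ := hS
  exact ⟨qId_le_qProd_qId.trans (qProd_mono hR_refl hS_refl),
    qComp_qProd_le.trans (qProd_mono hR_trans hS_trans),
    qProd_inf_qAdj_le hR_antisymm hS_antisymm⟩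
end
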